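/- arXiv:0904.2452 — 2 statements merged into one kernel-verified Lean document; each statement's English description precedes it below -/
import Mathlib

section
/- Let T ≥ 1 and K ≥ 1 be integers and α > 0 a real number, and for n ∈ ℕ let ṽ_n denote the n-th Taylor coefficient at 0 of z ↦ exp((K/T)·(1−αz)^{−T}). Then for all n ∈ ℕ with n ≥ 1: ṽ_n ≤ α^n · (1 − (K/(n+K+1))^{1/(T+1)})^{−n} · exp((K/T) · ((n+K+1)/K)^{T/(T+1)}). -/
/-!
All derivatives of `v` are nonnegative on `[0, 1/α)`: with `u x = (1 - α x)⁻¹`, `v` lies in the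
cone spanned over `ℝ≥0` by the functions `exp (c u^T) u^m`, and this cone is stable under
differentiation because `u' = α u²`. For such a function Taylor's theorem with Lagrange remainder
gives `v_n r^n ≤ v r` for `0 < r < 1/α`, and the bound is this inequality at
`r = (1 - (K/(n+K+1))^{1/(T+1)}) / α`, where `(1 - α r)^{-T} = ((n+K+1)/K)^{T/(T+1)}`.
-/

/-- The majorant function `v(z) = exp((K/T)·(1-αz)^{-T})`. -/
noncomputable def majorantFun (K α : ℝ) (T : ℕ) : ℝ → ℝ :=
  fun x => Real.exp (K / T * ((1 - α * x) ^ T)⁻¹)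

/-- The `n`-th Taylor coefficient of `f` at `0`. -/
noncomputable def taylorCoeff (f : ℝ → ℝ) (n : ℕ) : ℝ :=
  iteratedDeriv n f 0 / n.factorial

open Set Filter Topology NNReal Nat

section TaylorBound

variable {f : ℝ → ℝ} {a b : ℝ}

theorem eqOn_iteratedDerivWithin_Icc (hab : a < b)
    (hf : ∀ k, ∀ x ∈ Icc a b, HasDerivAt (iteratedDeriv k f) (iteratedDeriv (k + 1) f x) x)
    (k : ℕ) : EqOn (iteratedDerivWithin k f (Icc a b)) (iteratedDeriv k f) (Icc a b) := by
  induction k with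
  | zero => intro x _; simp
  | succ k ih =>
    intro x hx
    rw [iteratedDerivWithin_succ, derivWithin_congr ih (ih hx),
      (hf k x hx).hasDerivWithinAt.derivWithin (uniqueDiffOn_Icc hab x hx)]

theorem iteratedDeriv_div_factorial_mul_pow_le (hab : a < b)
    (hf : ∀ k, ∀ x ∈ Icc a b, HasDerivAt (iteratedDeriv k f) (iteratedDeriv (k + 1) f x) x)
    (hf_nonneg : ∀ k, ∀ x ∈ Icc a b, 0 ≤ iteratedDeriv k f x) (n : ℕ) :
    iteratedDeriv n f a / n ! * (b - a) ^ n ≤ f b := by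
  have hW := eqOn_iteratedDerivWithin_Icc hab hf
  have hdiff : ∀ k, DifferentiableOn ℝ (iteratedDerivWithin k f (Icc a b)) (Icc a b) :=
    fun k x hx => ((hf k x hx).differentiableAt.differentiableWithinAt).congr
      (hW k) (hW k hx)
  obtain ⟨ξ, hξ, hrem⟩ := taylor_mean_remainder_lagrange (f := f) (n := n) hab.ne
    (by rw [uIcc_of_le hab.le]; exact contDiffOn_of_differentiableOn_deriv fun k _ => hdiff k)
    (by rw [uIcc_of_le hab.le, uIoo_of_le hab.le]; exact (hdiff n).mono Ioo_subset_Icc_self)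
  rw [uIcc_of_le hab.le] at hrem
  rw [uIoo_of_le hab.le] at hξ
  have ha : a ∈ Icc a b := left_mem_Icc.2 hab.le
  have hba : 0 ≤ b - a := sub_nonneg.2 hab.le
  have hξ' : ξ ∈ Icc a b := Ioo_subset_Icc_self hξ
  have hterm : ∀ k, iteratedDeriv k f a / k ! * (b - a) ^ k =
      ((k ! : ℝ)⁻¹ * (b - a) ^ k) • iteratedDerivWithin k f (Icc a b) a := by
    intro k; rw [hW k ha, smul_eq_mul]; ring
  have hpoly : iteratedDeriv n f a / n ! * (b - a) ^ n ≤ taylorWithinEval f n (Icc a b) a b := by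
    rw [taylor_within_apply, hterm]
    refine Finset.single_le_sum (f := fun k => ((k ! : ℝ)⁻¹ * (b - a) ^ k) •
      iteratedDerivWithin k f (Icc a b) a) (fun k _ => ?_) (Finset.self_mem_range_succ n)
    rw [← hterm]
    have hk := hf_nonneg k a ha
    positivity
  have hrem_nonneg :
      0 ≤ iteratedDerivWithin (n + 1) f (Icc a b) ξ * (b - a) ^ (n + 1) / (n + 1)! := by
    rw [hW _ hξ']
    have hn := hf_nonneg (n + 1) ξ hξ'
    positivity
  linarith

end TaylorBound

section NonnegSpan

variable {b : ℕ → ℝ → ℝ} {U : Set ℝ}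

theorem nonneg_mul_mem_span_nnreal_range {a : ℝ} (ha : 0 ≤ a) (m : ℕ) :
    (fun x => a * b m x) ∈ Submodule.span ℝ≥0 (range b) :=
  Submodule.smul_mem _ (⟨a, ha⟩ : ℝ≥0) (Submodule.subset_span (mem_range_self m))

theorem nonneg_of_mem_span_nnreal {x : ℝ} (hb : ∀ m, 0 ≤ b m x) {g : ℝ → ℝ}
    (hg : g ∈ Submodule.span ℝ≥0 (range b)) : 0 ≤ g x := by
  induction hg using Submodule.span_induction with
  | mem g hg => obtain ⟨m, rfl⟩ := hg; exact hb m
  | zero => simp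
  | add g h _ _ ihg ihh => exact add_nonneg ihg ihh
  | smul c g _ ih => exact mul_nonneg c.2 ih

theorem exists_hasDerivAt_of_mem_span_nnreal
    (hb : ∀ m, ∃ b' ∈ Submodule.span ℝ≥0 (range b), ∀ x ∈ U, HasDerivAt (b m) (b' x) x)
    {g : ℝ → ℝ} (hg : g ∈ Submodule.span ℝ≥0 (range b)) :
    ∃ g' ∈ Submodule.span ℝ≥0 (range b), ∀ x ∈ U, HasDerivAt g (g' x) x := by
  induction hg using Submodule.span_induction with
  | mem g hg => obtain ⟨m, rfl⟩ := hg; exact hb m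
  | zero => exact ⟨0, zero_mem _, fun x _ => hasDerivAt_const x 0⟩
  | add g h _ _ ihg ihh =>
    obtain ⟨g', hg', hgd⟩ := ihg
    obtain ⟨h', hh', hhd⟩ := ihh
    exact ⟨g' + h', add_mem hg' hh', fun x hx => (hgd x hx).add (hhd x hx)⟩
  | smul c g _ ih =>
    obtain ⟨g', hg', hgd⟩ := ih
    exact ⟨c • g', Submodule.smul_mem _ c hg', fun x hx => (hgd x hx).const_mul (c : ℝ)⟩

theorem exists_eqOn_iteratedDeriv_of_mem_span_nnreal (hU : IsOpen U)
    (hb : ∀ m, ∃ b' ∈ Submodule.span ℝ≥0 (range b), ∀ x ∈ U, HasDerivAt (b m) (b' x) x)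
    {f : ℝ → ℝ} (hf : f ∈ Submodule.span ℝ≥0 (range b)) (k : ℕ) :
    ∃ g ∈ Submodule.span ℝ≥0 (range b), EqOn (iteratedDeriv k f) g U := by
  induction k with
  | zero => exact ⟨f, hf, fun x _ => by simp⟩
  | succ k ih =>
    obtain ⟨g, hg, hfg⟩ := ih
    obtain ⟨g', hg', hgd⟩ := exists_hasDerivAt_of_mem_span_nnreal hb hg
    refine ⟨g', hg', fun x hx => ?_⟩
    rw [iteratedDeriv_succ, (eventuallyEq_of_mem (hU.mem_nhds hx) hfg).deriv_eq]
    exact (hgd x hx).deriv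

theorem hasDerivAt_iteratedDeriv_of_mem_span_nnreal (hU : IsOpen U)
    (hb : ∀ m, ∃ b' ∈ Submodule.span ℝ≥0 (range b), ∀ x ∈ U, HasDerivAt (b m) (b' x) x)
    {f : ℝ → ℝ} (hf : f ∈ Submodule.span ℝ≥0 (range b)) (k : ℕ) {x : ℝ} (hx : x ∈ U) :
    HasDerivAt (iteratedDeriv k f) (iteratedDeriv (k + 1) f x) x := by
  obtain ⟨g, hg, hfg⟩ := exists_eqOn_iteratedDeriv_of_mem_span_nnreal hU hb hf k
  obtain ⟨g', -, hgd⟩ := exists_hasDerivAt_of_mem_span_nnreal hb hg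
  have hfg_near : iteratedDeriv k f =ᶠ[𝓝 x] g := eventuallyEq_of_mem (hU.mem_nhds hx) hfg
  have hfd := (hgd x hx).congr_of_eventuallyEq hfg_near
  rwa [iteratedDeriv_succ, hfd.deriv]

end NonnegSpan

theorem hasDerivAt_inv_one_sub_mul_pow (α : ℝ) (m : ℕ) {x : ℝ} (hx : 1 - α * x ≠ 0) :
    HasDerivAt (fun y => (1 - α * y)⁻¹ ^ m) (m * α * (1 - α * x)⁻¹ ^ (m + 1)) x := by
  have hlin : HasDerivAt (fun y : ℝ => 1 - α * y) (-α) x := by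
    simpa using ((hasDerivAt_id x).const_mul α).const_sub 1
  have hinv : HasDerivAt (fun y : ℝ => (1 - α * y)⁻¹) (α * (1 - α * x)⁻¹ ^ 2) x :=
    (hlin.fun_inv hx).congr_deriv (by field_simp)
  refine (hinv.fun_pow m).congr_deriv ?_
  rcases m with _ | m
  · simp
  · simp only [Nat.cast_add, Nat.cast_one, Nat.add_sub_cancel]
    ring

noncomputable def majorantTerm (c α : ℝ) (T m : ℕ) (x : ℝ) : ℝ :=
  Real.exp (c * (1 - α * x)⁻¹ ^ T) * (1 - α * x)⁻¹ ^ m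

theorem hasDerivAt_majorantTerm (c α : ℝ) (T m : ℕ) {x : ℝ} (hx : 1 - α * x ≠ 0) :
    HasDerivAt (majorantTerm c α T m)
      (c * T * α * majorantTerm c α T (T + m + 1) x + m * α * majorantTerm c α T (m + 1) x) x := by
  refine ((((hasDerivAt_inv_one_sub_mul_pow α T hx).const_mul c).exp).mul
    (hasDerivAt_inv_one_sub_mul_pow α m hx)).congr_deriv ?_
  simp only [majorantTerm]
  ring

theorem majorantFun_eq_majorantTerm (K α : ℝ) (T : ℕ) :
    majorantFun K α T = majorantTerm (K / T) α T 0 := by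
  ext x
  simp [majorantFun, majorantTerm, inv_pow]

theorem taylorCoeff_majorantFun_mul_pow_le {K α r : ℝ} (hK : 0 ≤ K) (hα : 0 ≤ α) (hr : 0 < r)
    (hαr : α * r < 1) (T n : ℕ) :
    taylorCoeff (majorantFun K α T) n * r ^ n ≤ majorantFun K α T r := by
  set c := K / T
  have hU : IsOpen {x : ℝ | α * x < 1} := isOpen_lt (by fun_prop) continuous_const
  have hIcc : Icc 0 r ⊆ {x : ℝ | α * x < 1} := fun x hx =>
    (mul_le_mul_of_nonneg_left hx.2 hα).trans_lt hαr
  have hderiv : ∀ m, ∃ b' ∈ Submodule.span ℝ≥0 (range (majorantTerm c α T)),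
      ∀ x ∈ {x : ℝ | α * x < 1}, HasDerivAt (majorantTerm c α T m) (b' x) x := fun m =>
    ⟨_, add_mem (nonneg_mul_mem_span_nnreal_range (by positivity) _)
      (nonneg_mul_mem_span_nnreal_range (by positivity) _),
      fun x (hx : α * x < 1) => hasDerivAt_majorantTerm c α T m (by linarith)⟩
  have hf : majorantFun K α T ∈ Submodule.span ℝ≥0 (range (majorantTerm c α T)) := by
    rw [majorantFun_eq_majorantTerm]; exact Submodule.subset_span ⟨0, rfl⟩
  have hnonneg : ∀ k, ∀ x ∈ Icc 0 r, 0 ≤ iteratedDeriv k (majorantFun K α T) x := by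
    intro k x hx
    obtain ⟨g, hg, hfg⟩ := exists_eqOn_iteratedDeriv_of_mem_span_nnreal hU hderiv hf k
    rw [hfg (hIcc hx)]
    have hx' : 0 < 1 - α * x := by linarith [show α * x < 1 from hIcc hx]
    exact nonneg_of_mem_span_nnreal (fun m => by unfold majorantTerm; positivity) hg
  simpa [taylorCoeff] using iteratedDeriv_div_factorial_mul_pow_le hr
    (fun k x hx => hasDerivAt_iteratedDeriv_of_mem_span_nnreal hU hderiv hf k (hIcc hx))
    hnonneg n

theorem majorant_fun_coeff_saddle_point_bound_general (T K : ℕ) (hK : 1 ≤ K)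
    (α : ℝ) (hα : 0 < α) (n : ℕ) :
    taylorCoeff (majorantFun K α T) n ≤
      α ^ n * ((1 - ((K : ℝ) / ((n : ℝ) + K + 1)) ^ ((1 : ℝ) / (T + 1)))⁻¹) ^ n *
        Real.exp ((K : ℝ) / T * (((n : ℝ) + K + 1) / K) ^ ((T : ℝ) / (T + 1))) := by
  set N : ℝ := n + K + 1
  have hK0 : (0 : ℝ) < K := by exact_mod_cast hK
  have hq0 : 0 < (K : ℝ) / N := by positivity
  have hq1 : (K : ℝ) / N < 1 :=
    (div_lt_one (by positivity)).2 (by simp only [N]; linarith [n.cast_nonneg (α := ℝ)])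
  set β := ((K : ℝ) / N) ^ ((1 : ℝ) / (T + 1))
  have hβ0 : 0 < β := Real.rpow_pos_of_pos hq0 _
  have hβ1 : β < 1 := Real.rpow_lt_one hq0.le hq1 (by positivity)
  set r := (1 - β) / α
  have hr : 0 < r := div_pos (by linarith) hα
  have hαr : α * r = 1 - β := mul_div_cancel₀ _ hα.ne'
  have hfr : majorantFun K α T r = Real.exp (K / T * (N / K) ^ ((T : ℝ) / (T + 1))) := by
    have hβT : β ^ T = (K / N) ^ ((T : ℝ) / (T + 1)) := by
      rw [← Real.rpow_mul_natCast hq0.le]; congr 1; field_simp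
    rw [majorantFun, show 1 - α * r = β by linarith, hβT, ← Real.inv_rpow hq0.le, inv_div]
  have hr_pow : α ^ n * ((1 - β)⁻¹) ^ n = (r ^ n)⁻¹ := by
    rw [← mul_pow, ← inv_pow, ← hαr, mul_inv, mul_inv_cancel_left₀ hα.ne']
  rw [hr_pow, ← hfr, inv_mul_eq_div, le_div_iff₀ (by positivity)]
  exact taylorCoeff_majorantFun_mul_pow_le hK0.le hα.le hr (by linarith) T n

theorem majorant_fun_coeff_saddle_point_bound (T K : ℕ) (hT : 1 ≤ T) (hK : 1 ≤ K)
    (α : ℝ) (hα : 0 < α) (n : ℕ) (hn : 1 ≤ n) :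
    taylorCoeff (majorantFun K α T) n ≤
      α ^ n * ((1 - ((K : ℝ) / ((n : ℝ) + K + 1)) ^ ((1 : ℝ) / (T + 1)))⁻¹) ^ n *
        Real.exp ((K : ℝ) / T * (((n : ℝ) + K + 1) / K) ^ ((T : ℝ) / (T + 1))) :=
  majorant_fun_coeff_saddle_point_bound_general T K hK α hα n
end

section
/- Let r ≥ 1 and T ≥ 0 be integers, α > 0 a real number, Q a monic real polynomial of degree r, and let M^{[0]}, …, M^{[r−1]} ≥ 0 be reals. Let u ∈ ℂ[[z]] and for 0 ≤ k < r let ã^{[k]} ∈ ℂ[[z]] be power series whose coefficients satisfy |ã^{[k]}_i| ≤ M^{[k]} · C(i + r−k+T−1, r−k+T−1) · α^i for all i ∈ ℕ. Assume that Q(n)·u_n = Σ_{j=0}^{n−1} Σ_{k=0}^{r−1} ã^{[k]}_{n−1−j} · j^k · u_j for every n ∈ ℕ. Then there exist a real A ≥ 0 and a positive integer K such that: if T = 0, then |u_n| ≤ A · C(n+K−1, K−1) · α^n for all n ∈ ℕ; and if T ≥ 1, then |u_n| ≤ A · ṽ_n for all n ∈ ℕ, where ṽ_n is the n-th Taylor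 coefficient at 0 of z ↦ exp((K/T)·(1−αz)^{−T}). -/
open Finset Filter

namespace Nat

theorem add_choose_le_succ_pow_mul (i T s : ℕ) :
    (i + (T + s)).choose (T + s) ≤ (i + 1) ^ s * (i + T).choose T := by
  induction s with
  | zero => simp
  | succ s ih =>
    have step :
        (i + (T + (s + 1))).choose (T + (s + 1)) ≤ (i + 1) * (i + (T + s)).choose (T + s) := by
      refine Nat.le_of_mul_le_mul_right (c := T + s + 1) ?_ (by omega)
      rw [← add_assoc T, ← add_assoc i, ← add_one_mul_choose_eq, add_assoc i]
      calc (i + (T + s) + 1) * (i + (T + s)).choose (T + s)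
          ≤ ((i + 1) * (T + s + 1)) * (i + (T + s)).choose (T + s) :=
            Nat.mul_le_mul_right _ (by nlinarith)
        _ = (i + 1) * (i + (T + s)).choose (T + s) * (T + s + 1) := by ring
    calc _ ≤ (i + 1) * ((i + 1) ^ s * (i + T).choose T) := step.trans (Nat.mul_le_mul_left _ ih)
      _ = (i + 1) ^ (s + 1) * (i + T).choose T := by ring

theorem add_choose_mul_pow_le {r T k i j n : ℕ} (hk : k < r) (hijn : i + j < n) :
    (i + (r - k + T - 1)).choose (r - k + T - 1) * j ^ k ≤ n ^ (r - 1) * (i + T).choose T := by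
  obtain ⟨s, rfl⟩ : ∃ s, r = k + s + 1 := ⟨r - k - 1, by omega⟩
  rw [show k + s + 1 - k + T - 1 = T + s by omega, show k + s + 1 - 1 = s + k by omega, pow_add]
  calc _ ≤ (i + 1) ^ s * (i + T).choose T * j ^ k :=
        Nat.mul_le_mul_right _ (add_choose_le_succ_pow_mul i T s)
    _ ≤ n ^ s * (i + T).choose T * n ^ k := by gcongr <;> omega
    _ = n ^ s * n ^ k * (i + T).choose T := by ring

end Nat

theorem PowerSeries.coeff_invOneSubPow (S : Type*) [CommRing S] (d n : ℕ) :
    coeff n (invOneSubPow S d : PowerSeries S) = (n + d - 1).choose n := by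
  cases d with
  | zero => cases n <;> simp [invOneSubPow_zero, coeff_one]
  | succ d =>
    simp [invOneSubPow_val_succ_eq_mk_add_choose, add_comm d n, Nat.choose_symm_add (a := n)]

namespace Nat

-- the coefficient of `z^m` in `(1 - z)^{-P} (1 - z)^{-(T+1)} = (1 - z)^{-(P+T+1)}`
theorem sum_range_sub_add_choose_mul_add_choose (m T P : ℕ) :
    ∑ j ∈ range (m + 1), (m - j + T).choose T * (j + P - 1).choose j =
      (m + (P + T)).choose m := by
  have h := congrArg (PowerSeries.coeff m ∘ Units.val)
    (PowerSeries.invOneSubPow_add ℤ P (T + 1))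
  simp only [Function.comp_apply, Units.val_mul, PowerSeries.coeff_mul,
    PowerSeries.coeff_invOneSubPow, Nat.sum_antidiagonal_eq_sum_range_succ_mk,
    show m + (P + (T + 1)) - 1 = m + (P + T) by omega] at h
  refine Nat.cast_injective (R := ℤ) (h.trans ?_).symm
  push_cast
  refine sum_congr rfl fun j _ => ?_
  rw [← add_assoc, add_tsub_cancel_right, choose_symm_add, mul_comm]

-- the coefficient form of `((1 - z)^{-(P+T)})' = (P + T) (1 - z)^{-(T+1)} (1 - z)^{-P}`
theorem mul_add_sub_one_choose_eq (n T P : ℕ) :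
    n * (n + (P + T) - 1).choose n =
      (P + T) * ∑ j ∈ range n, (n - 1 - j + T).choose T * (j + P - 1).choose j := by
  rcases n with _ | m
  · simp
  rw [add_tsub_cancel_right, sum_range_sub_add_choose_mul_add_choose, mul_comm,
    show m + 1 + (P + T) - 1 = m + (P + T) by omega, choose_succ_right_eq]
  simp [mul_comm]

end Nat

theorem hasSum_choose_mul_pow (P : ℕ) {r : ℝ} (hr : |r| < 1) :
    HasSum (fun n => ((n + P - 1).choose n : ℝ) * r ^ n) ((1 - r) ^ P)⁻¹ := by
  cases P with
  | zero =>
    convert hasSum_ite_eq 0 (1 : ℝ) using 1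
    · ext n; cases n <;> simp
    · simp
  | succ d =>
    simpa only [← add_assoc, add_tsub_cancel_right, Nat.choose_symm_add, one_div] using
      hasSum_choose_mul_geometric_of_norm_lt_one d (r := r) (by simpa using hr)

-- `C(n + T m - 1, n)` is the `n`-th coefficient of `(1 - z)^{-T m}`; for `T m = 0` the truncated
-- subtraction makes it `1` at `n = 0` and `0` after.
noncomputable def expInvOneSubPowCoeff (c : ℝ) (T n : ℕ) : ℝ :=
  ∑' m : ℕ, c ^ m / m.factorial * ((n + T * m - 1).choose n : ℝ)

theorem summable_expInvOneSubPow_prod (c : ℝ) (T : ℕ) {r : ℝ} (hr : |r| < 1) :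
    Summable fun p : ℕ × ℕ =>
      c ^ p.1 / p.1.factorial * ((p.2 + T * p.1 - 1).choose p.2 : ℝ) * r ^ p.2 := by
  refine Summable.of_norm ?_
  simp only [norm_mul, norm_div, norm_pow, Real.norm_eq_abs, Nat.abs_cast]
  have hrow (m : ℕ) :
      HasSum (fun n => |c| ^ m / m.factorial * ((n + T * m - 1).choose n : ℝ) * |r| ^ n)
        (|c| ^ m / m.factorial * ((1 - |r|) ^ (T * m))⁻¹) := by
    simpa only [mul_assoc] using
      (hasSum_choose_mul_pow (T * m) (by rwa [abs_abs])).mul_left (|c| ^ m / m.factorial)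
  refine (summable_prod_of_nonneg fun _ => by positivity).2 ⟨fun m => (hrow m).summable, ?_⟩
  simp_rw [(hrow _).tsum_eq, pow_mul, ← inv_pow, div_mul_eq_mul_div, ← mul_pow]
  exact Real.summable_pow_div_factorial _

theorem hasSum_expInvOneSubPowCoeff_mul_pow (c : ℝ) (T : ℕ) {r : ℝ} (hr : |r| < 1) :
    HasSum (fun n => expInvOneSubPowCoeff c T n * r ^ n) (Real.exp (c * ((1 - r) ^ T)⁻¹)) := by
  have hG := summable_expInvOneSubPow_prod c T hr
  have hrows : HasSum (fun m : ℕ => (c * ((1 - r) ^ T)⁻¹) ^ m / m.factorial) (∑' p, _) :=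
    hG.hasSum.prod_fiberwise fun m => by
      simpa only [mul_assoc, pow_mul, ← inv_pow, div_mul_eq_mul_div, ← mul_pow] using
        (hasSum_choose_mul_pow (T * m) hr).mul_left (c ^ m / m.factorial)
  have hcols : HasSum (fun n => expInvOneSubPowCoeff c T n * r ^ n) _ :=
    hG.prod_symm.hasSum.prod_fiberwise fun n => by
      simpa only [expInvOneSubPowCoeff, Prod.swap_prod_mk, tsum_mul_right] using
        (hG.prod_symm.prod_factor n).hasSum
  rwa [Real.exp_eq_exp_ℝ, (NormedSpace.expSeries_div_hasSum_exp _).unique hrows,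
    ← (Equiv.prodComm ℕ ℕ).tsum_eq]

theorem summable_expInvOneSubPowCoeff_terms (c : ℝ) (T n : ℕ) :
    Summable fun m : ℕ => c ^ m / m.factorial * ((n + T * m - 1).choose n : ℝ) :=
  (summable_mul_right_iff (a := (1 / 2 : ℝ) ^ n) (by positivity)).1 <|
    (summable_expInvOneSubPow_prod c T (by norm_num)).prod_symm.prod_factor n

theorem expInvOneSubPowCoeff_pos {c : ℝ} (hc : 0 < c) {T : ℕ} (hT : 1 ≤ T) (n : ℕ) :
    0 < expInvOneSubPowCoeff c T n := by
  refine (summable_expInvOneSubPowCoeff_terms c T n).tsum_pos (fun m => by positivity) 1 ?_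
  have : 0 < (n + T * 1 - 1).choose n := Nat.choose_pos (by omega)
  positivity

theorem natCast_mul_expInvOneSubPowCoeff (c : ℝ) (T n : ℕ) :
    n * expInvOneSubPowCoeff c T n =
      c * T * ∑ j ∈ range n, ((n - 1 - j + T).choose T : ℝ) * expInvOneSubPowCoeff c T j := by
  have hterms := summable_expInvOneSubPowCoeff_terms c T
  have hzero : (n : ℝ) * (c ^ 0 / (0 : ℕ).factorial * ((n + T * 0 - 1).choose n : ℝ)) = 0 := by
    rcases n with _ | n <;> simp
  have hsucc (m : ℕ) :
      (n : ℝ) * (c ^ (m + 1) / (m + 1).factorial * ((n + T * (m + 1) - 1).choose n : ℝ)) =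
        c * T * ∑ j ∈ range n, ((n - 1 - j + T).choose T : ℝ) *
          (c ^ m / m.factorial * ((j + T * m - 1).choose j : ℝ)) := by
    have h : (n : ℝ) * ((n + T * (m + 1) - 1).choose n : ℝ) = T * (m + 1) *
        ∑ j ∈ range n, ((n - 1 - j + T).choose T : ℝ) * ((j + T * m - 1).choose j : ℝ) := by
      rw [mul_add_one]
      exact_mod_cast Nat.mul_add_sub_one_choose_eq n T (T * m)
    calc _ = c ^ (m + 1) / (m + 1).factorial *
          ((n : ℝ) * ((n + T * (m + 1) - 1).choose n : ℝ)) := by ring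
      _ = c * T * (c ^ m / m.factorial) *
          ∑ j ∈ range n, ((n - 1 - j + T).choose T : ℝ) * ((j + T * m - 1).choose j : ℝ) := by
          rw [h, Nat.factorial_succ]; push_cast; field_simp; ring
      _ = _ := by rw [mul_sum, mul_sum]; exact sum_congr rfl fun j _ => by ring
  rw [expInvOneSubPowCoeff, ← tsum_mul_left, ((hterms n).mul_left _).tsum_eq_zero_add, hzero,
    zero_add, tsum_congr hsucc, tsum_mul_left,
    Summable.tsum_finsetSum fun j _ => (hterms j).mul_left _]
  simp only [expInvOneSubPowCoeff, tsum_mul_left]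

theorem taylorCoeff_eq_of_hasSum {f : ℝ → ℝ} {a : ℕ → ℝ} {ρ : ℝ} (hρ : 0 < ρ)
    (hf : ∀ x, |x| < ρ → HasSum (fun n => a n * x ^ n) (f x)) (n : ℕ) :
    taylorCoeff f n = a n := by
  set R := (ρ / 2).toNNReal
  have hR : (R : ℝ) = ρ / 2 := Real.coe_toNNReal _ (half_pos hρ).le
  have hball : HasFPowerSeriesOnBall f (FormalMultilinearSeries.ofScalars ℝ a) 0 R := by
    refine ⟨?_, ENNReal.coe_pos.2 (Real.toNNReal_pos.2 (half_pos hρ)), fun {y} hy => ?_⟩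
    · refine FormalMultilinearSeries.le_radius_of_tendsto _ (l := 0) ?_
      have := hf R (by rw [hR, abs_of_pos (half_pos hρ)]; exact half_lt_self hρ)
      simpa [FormalMultilinearSeries.ofScalars_norm] using this.summable.tendsto_atTop_zero.norm
    · have hy : |y| < R := by simpa using hy
      simpa [FormalMultilinearSeries.ofScalars_apply_eq, mul_comm] using
        hf y (by linarith [half_lt_self hρ])
  have := hball.factorial_smul 1 n
  rw [taylorCoeff, iteratedDeriv_eq_iteratedFDeriv, ← this,
    FormalMultilinearSeries.ofScalars_apply_eq]
  simp [n.factorial_ne_zero]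

theorem taylorCoeff_majorantFun (K : ℝ) {α : ℝ} (hα : 0 < α) (T n : ℕ) :
    taylorCoeff (majorantFun K α T) n = α ^ n * expInvOneSubPowCoeff (K / T) T n := by
  refine taylorCoeff_eq_of_hasSum (a := fun n => α ^ n * expInvOneSubPowCoeff (K / T) T n)
    (inv_pos.2 hα) (fun x hx => ?_) n
  have hαx : |α * x| < 1 := by
    rwa [abs_mul, abs_of_pos hα, ← lt_div_iff₀' hα, one_div]
  convert hasSum_expInvOneSubPowCoeff_mul_pow (K / T) T hαx using 1
  · ext m
    ring
  · rfl

theorem Polynomial.Monic.eventually_pow_natDegree_div_two_le_eval {Q : Polynomial ℝ}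
    (hQ : Q.Monic) : ∀ᶠ x in atTop, x ^ Q.natDegree / 2 ≤ Q.eval x := by
  filter_upwards [(Polynomial.isEquivalent_atTop_lead Q).isLittleO.bound (c := 1 / 2) (by norm_num),
    eventually_ge_atTop 0] with x hx hx0
  simp only [hQ.leadingCoeff, one_mul, Pi.sub_apply, Real.norm_eq_abs] at hx
  rw [abs_of_nonneg (pow_nonneg hx0 _)] at hx
  linarith [neg_abs_le (Q.eval x - x ^ Q.natDegree)]

theorem exists_le_mul_of_le_sum_mul {c w q : ℕ → ℝ} {κ : ℕ → ℕ → ℝ}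
    (hc : ∀ n, 0 ≤ c n) (hw : ∀ n, 0 < w n) (hκ : ∀ n j, 0 ≤ κ n j)
    (h : ∀ᶠ n in atTop, 0 < q n ∧ q n * c n ≤ ∑ j ∈ range n, κ n j * c j ∧
      ∑ j ∈ range n, κ n j * w j ≤ q n * w n) :
    ∃ A, 0 ≤ A ∧ ∀ n, c n ≤ A * w n := by
  obtain ⟨N, hN⟩ := eventually_atTop.1 h
  set A := ∑ j ∈ range N, c j / w j
  have hA : 0 ≤ A := sum_nonneg fun j _ => div_nonneg (hc j) (hw j).le
  refine ⟨A, hA, fun n => ?_⟩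
  induction n using Nat.strong_induction_on with
  | _ n ih =>
  rcases lt_or_ge n N with hn | hn
  · rw [← div_le_iff₀ (hw n)]
    exact single_le_sum (fun j _ => div_nonneg (hc j) (hw j).le) (mem_range.2 hn)
  · obtain ⟨hq, hcn, hwn⟩ := hN n hn
    refine le_of_mul_le_mul_left ?_ hq
    calc q n * c n ≤ ∑ j ∈ range n, κ n j * (A * w j) :=
          hcn.trans <| sum_le_sum fun j hj =>
            mul_le_mul_of_nonneg_left (ih j (mem_range.1 hj)) (hκ n j)
      _ = A * ∑ j ∈ range n, κ n j * w j := by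
          rw [mul_sum]; exact sum_congr rfl fun j _ => by ring
      _ ≤ A * (q n * w n) := mul_le_mul_of_nonneg_left hwn hA
      _ = q n * (A * w n) := by ring

noncomputable def recurrenceKernel (r T : ℕ) (α : ℝ) (Mk : ℕ → ℝ) (n j : ℕ) : ℝ :=
  ∑ k ∈ range r, Mk k * ((n - 1 - j + (r - k + T - 1)).choose (r - k + T - 1) : ℝ) *
    α ^ (n - 1 - j) * (j : ℝ) ^ k

theorem recurrenceKernel_nonneg {r T : ℕ} {α : ℝ} (hα : 0 ≤ α) {Mk : ℕ → ℝ}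
    (hMk : ∀ k, 0 ≤ Mk k) (n j : ℕ) : 0 ≤ recurrenceKernel r T α Mk n j :=
  sum_nonneg fun k _ => by have := hMk k; positivity

theorem recurrenceKernel_le {r T : ℕ} {α : ℝ} (hα : 0 ≤ α) {Mk : ℕ → ℝ}
    (hMk : ∀ k, 0 ≤ Mk k) {n j : ℕ} (hj : j < n) :
    recurrenceKernel r T α Mk n j ≤
      (∑ k ∈ range r, Mk k) * n ^ (r - 1) * (n - 1 - j + T).choose T * α ^ (n - 1 - j) := by
  simp only [recurrenceKernel, sum_mul]
  refine sum_le_sum fun k hk => ?_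
  have h : ((n - 1 - j + (r - k + T - 1)).choose (r - k + T - 1) : ℝ) * (j : ℝ) ^ k ≤
      n ^ (r - 1) * (n - 1 - j + T).choose T := by
    exact_mod_cast Nat.add_choose_mul_pow_le (mem_range.1 hk) (show n - 1 - j + j < n by omega)
  have := hMk k
  calc _ = Mk k * α ^ (n - 1 - j) *
        (((n - 1 - j + (r - k + T - 1)).choose (r - k + T - 1) : ℝ) * (j : ℝ) ^ k) := by ring
    _ ≤ Mk k * α ^ (n - 1 - j) * (n ^ (r - 1) * (n - 1 - j + T).choose T) := by gcongr
    _ = _ := by ring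

theorem eval_mul_norm_coeff_le {r T : ℕ} {α : ℝ} {Q : Polynomial ℝ} {Mk : ℕ → ℝ}
    {u : PowerSeries ℂ} {a : ℕ → PowerSeries ℂ}
    (hbound : ∀ k < r, ∀ i : ℕ,
      ‖PowerSeries.coeff i (a k)‖ ≤
        Mk k * ((i + (r - k + T - 1)).choose (r - k + T - 1)) * α ^ i)
    (hrec : ∀ n : ℕ,
      (Complex.ofReal (Q.eval (n : ℝ))) * PowerSeries.coeff n u =
        ∑ j ∈ Finset.range n, ∑ k ∈ Finset.range r,
          PowerSeries.coeff (n - 1 - j) (a k) * (j : ℂ) ^ k * PowerSeries.coeff j u) (n : ℕ) :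
    Q.eval (n : ℝ) * ‖PowerSeries.coeff n u‖ ≤
      ∑ j ∈ range n, recurrenceKernel r T α Mk n j * ‖PowerSeries.coeff j u‖ := by
  calc Q.eval (n : ℝ) * ‖PowerSeries.coeff n u‖
      ≤ ‖Complex.ofReal (Q.eval (n : ℝ)) * PowerSeries.coeff n u‖ := by
        rw [norm_mul, Complex.norm_real, Real.norm_eq_abs]
        exact mul_le_mul_of_nonneg_right (le_abs_self _) (norm_nonneg _)
    _ ≤ ∑ j ∈ range n, ∑ k ∈ range r,
          ‖PowerSeries.coeff (n - 1 - j) (a k) * (j : ℂ) ^ k * PowerSeries.coeff j u‖ := by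
        rw [hrec]
        exact (norm_sum_le _ _).trans (sum_le_sum fun j _ => norm_sum_le _ _)
    _ ≤ _ := sum_le_sum fun j _ => by
        rw [recurrenceKernel, sum_mul]
        refine sum_le_sum fun k hk => ?_
        rw [norm_mul, norm_mul, norm_pow, Complex.norm_natCast]
        gcongr
        exact hbound k (mem_range.1 hk) _

theorem exists_norm_coeff_le_of_majorant {r T : ℕ} (hr : 1 ≤ r) {α : ℝ} (hα : 0 < α)
    {Q : Polynomial ℝ} (hQ : Q.Monic) (hQdeg : Q.natDegree = r) {Mk : ℕ → ℝ}
    (hMk : ∀ k, 0 ≤ Mk k) {u : PowerSeries ℂ} {a : ℕ → PowerSeries ℂ}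
    (hbound : ∀ k < r, ∀ i : ℕ,
      ‖PowerSeries.coeff i (a k)‖ ≤
        Mk k * ((i + (r - k + T - 1)).choose (r - k + T - 1)) * α ^ i)
    (hrec : ∀ n : ℕ,
      (Complex.ofReal (Q.eval (n : ℝ))) * PowerSeries.coeff n u =
        ∑ j ∈ Finset.range n, ∑ k ∈ Finset.range r,
          PowerSeries.coeff (n - 1 - j) (a k) * (j : ℂ) ^ k * PowerSeries.coeff j u)
    {K : ℝ} (hKM : 2 * ∑ k ∈ range r, Mk k ≤ K * α) (w : ℕ → ℝ) (hw : ∀ n, 0 < w n)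
    (hwrec : ∀ n : ℕ, n * w n = K * ∑ j ∈ range n, ((n - 1 - j + T).choose T : ℝ) * w j) :
    ∃ A, 0 ≤ A ∧ ∀ n, ‖PowerSeries.coeff n u‖ ≤ A * (α ^ n * w n) := by
  set M := ∑ k ∈ range r, Mk k
  refine exists_le_mul_of_le_sum_mul (q := fun n => Q.eval (n : ℝ))
    (κ := recurrenceKernel r T α Mk) (fun n => norm_nonneg _)
    (fun n => by have := hw n; positivity) (recurrenceKernel_nonneg hα.le hMk) ?_
  filter_upwards [tendsto_natCast_atTop_atTop.eventually
    hQ.eventually_pow_natDegree_div_two_le_eval, eventually_ge_atTop 1] with n hQn hn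
  rw [hQdeg] at hQn
  refine ⟨(by positivity : (0 : ℝ) < n ^ r / 2).trans_le hQn,
    eval_mul_norm_coeff_le hbound hrec n, ?_⟩
  have hS : 0 ≤ ∑ j ∈ range n, ((n - 1 - j + T).choose T : ℝ) * w j :=
    sum_nonneg fun j _ => by have := hw j; positivity
  calc _ ≤ ∑ j ∈ range n, M * n ^ (r - 1) * (n - 1 - j + T).choose T * α ^ (n - 1 - j) *
        (α ^ j * w j) := sum_le_sum fun j hj => by
          have := hw j
          gcongr
          exact recurrenceKernel_le hα.le hMk (mem_range.1 hj)
    _ = n ^ (r - 1) * α ^ (n - 1) *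
          (M * ∑ j ∈ range n, ((n - 1 - j + T).choose T : ℝ) * w j) := by
        rw [mul_sum, mul_sum]
        refine sum_congr rfl fun j hj => ?_
        rw [← pow_sub_mul_pow α (show j ≤ n - 1 by have := mem_range.1 hj; omega)]
        ring
    _ ≤ n ^ (r - 1) * α ^ (n - 1) * (α * (n * w n) / 2) := by
        rw [hwrec]
        have := mul_le_mul_of_nonneg_right hKM hS
        gcongr
        linarith
    _ = (n ^ (r - 1) * n) / 2 * (α ^ (n - 1) * α * w n) := by ring
    _ ≤ Q.eval (n : ℝ) * (α ^ n * w n) := by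
        rw [pow_sub_one_mul (by omega), pow_sub_one_mul (by omega)]
        have := hw n
        gcongr

theorem majorant_for_dfinite_regular_point (r : ℕ) (hr : 1 ≤ r) (T : ℕ)
    (α : ℝ) (hα : 0 < α) (Q : Polynomial ℝ) (hQmonic : Q.Monic) (hQdeg : Q.natDegree = r)
    (Mk : ℕ → ℝ) (hMk : ∀ k, 0 ≤ Mk k)
    (u : PowerSeries ℂ) (a : ℕ → PowerSeries ℂ)
    (hbound : ∀ k < r, ∀ i : ℕ,
      ‖PowerSeries.coeff i (a k)‖ ≤
        Mk k * ((i + (r - k + T - 1)).choose (r - k + T - 1)) * α ^ i)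
    (hrec : ∀ n : ℕ,
      (Complex.ofReal (Q.eval (n : ℝ))) * PowerSeries.coeff n u =
        ∑ j ∈ Finset.range n, ∑ k ∈ Finset.range r,
          PowerSeries.coeff (n - 1 - j) (a k) * (j : ℂ) ^ k * PowerSeries.coeff j u) :
    ∃ A : ℝ, 0 ≤ A ∧ ∃ K : ℕ, 1 ≤ K ∧
      (T = 0 → ∀ n : ℕ,
        ‖PowerSeries.coeff n u‖ ≤
          A * ((n + K - 1).choose (K - 1)) * α ^ n) ∧
      (1 ≤ T → ∀ n : ℕ,
        ‖PowerSeries.coeff n u‖ ≤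
          A * taylorCoeff (majorantFun K α T) n) := by
  have hM : 0 ≤ 2 * (∑ k ∈ range r, Mk k) / α := by
    have := sum_nonneg fun k (_ : k ∈ range r) => hMk k
    positivity
  obtain ⟨K, hK⟩ := exists_nat_gt (2 * (∑ k ∈ range r, Mk k) / α)
  have hK1 : 1 ≤ K := Nat.cast_pos.1 (hM.trans_lt hK)
  have hKM := ((div_lt_iff₀ hα).1 hK).le
  have hmaj := exists_norm_coeff_le_of_majorant hr hα hQmonic hQdeg hMk hbound hrec hKM
  rcases Nat.eq_zero_or_pos T with rfl | hT
  · obtain ⟨A, hA, hu⟩ := hmaj (fun n => ((n + K - 1).choose n : ℝ))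
      (fun n => Nat.cast_pos.2 (Nat.choose_pos (by omega)))
      (fun n => by exact_mod_cast Nat.mul_add_sub_one_choose_eq n 0 K)
    refine ⟨A, hA, K, hK1, fun _ n => ?_, fun h => absurd h (by omega)⟩
    rw [← Nat.choose_symm_of_eq_add (by omega : n + K - 1 = n + (K - 1))]
    exact (hu n).trans_eq (by ring)
  · obtain ⟨A, hA, hu⟩ := hmaj _ (expInvOneSubPowCoeff_pos (c := K / T) (by positivity) hT)
      (fun n => by
        rw [natCast_mul_expInvOneSubPowCoeff, div_mul_cancel₀ _ (by positivity)])
    refine ⟨A, hA, K, hK1, fun h => absurd h (by omega), fun _ n => ?_⟩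
    rw [taylorCoeff_majorantFun _ hα]
    exact hu n
end
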